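/- arXiv:1808.08839 — 4 statements merged into one kernel-verified Lean document; each statement's English description precedes it below -/
import Mathlib

section
/- Let L be a Lie algebra over a field k, let λ ∈ k, and let R be a Rota–Baxter operator of weight λ on L. Define x ∘ y := [R(x), y] and ⟨x, y⟩ := λ[x, y]. Then (L, ⟨,⟩, ∘) is a post-Lie algebra: ⟨,⟩ is a Lie bracket, and for all x, y, z ∈ L one has (x∘y)∘z − x∘(y∘z) − (y∘x)∘z + y∘(x∘z) = ⟨y, x⟩∘z and x∘⟨y, z⟩ = ⟨x∘y, z⟩ + ⟨y, x∘z⟩. -/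
/-!
The bracket `λ[·,·]` is a rescaling of `[·,·]`, and each `ad (R x)` is a derivation of it, which
gives antisymmetry, Jacobi and the second post-Lie identity. For the first one, the Rota–Baxter
identity rewrites `[R x, R y]` as `R([R x, y] - [R y, x] - λ[y, x])`; bracketing with `z` and
expanding `[[R x, R y], z]` by the Jacobi identity gives exactly the required relation.
-/

theorem lie_lie_add_lie_lie_add_lie_lie {L : Type*} [LieRing L] (x y z : L) :
    ⁅⁅x, y⁆, z⁆ + ⁅⁅y, z⁆, x⁆ + ⁅⁅z, x⁆, y⁆ = 0 := by
  rw [← lie_skew ⁅x, y⁆, ← lie_skew ⁅y, z⁆, ← lie_skew ⁅z, x⁆]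
  linear_combination (norm := abel) -lie_jacobi x y z

section ScaledBracket

variable {k L : Type*} [CommRing k] [LieRing L] [LieAlgebra k L]

theorem smul_lie_eq_neg_smul_lie (c : k) (x y : L) : c • ⁅x, y⁆ = -(c • ⁅y, x⁆) := by
  rw [← lie_skew, smul_neg]

theorem smul_lie_smul_lie_jacobi (c : k) (x y z : L) :
    c • ⁅c • ⁅x, y⁆, z⁆ + c • ⁅c • ⁅y, z⁆, x⁆ + c • ⁅c • ⁅z, x⁆, y⁆ = 0 := by
  simp only [smul_lie, ← smul_add, lie_lie_add_lie_lie_add_lie_lie, smul_zero]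

theorem lie_smul_lie_leibniz (a : L) (c : k) (y z : L) :
    ⁅a, c • ⁅y, z⁆⁆ = c • ⁅⁅a, y⁆, z⁆ + c • ⁅y, ⁅a, z⁆⁆ := by
  rw [lie_smul, leibniz_lie, smul_add]

end ScaledBracket

def IsRotaBaxter {k L : Type*} [CommRing k] [LieRing L] [LieAlgebra k L]
    (lam : k) (R : L →ₗ[k] L) : Prop :=
  ∀ x y : L, ⁅R x, R y⁆ = R (⁅R x, y⁆ + ⁅x, R y⁆ + lam • ⁅x, y⁆)

namespace IsRotaBaxter

variable {k L : Type*} [CommRing k] [LieRing L] [LieAlgebra k L] {lam : k} {R : L →ₗ[k] L}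

theorem lie_apply_apply (hR : IsRotaBaxter lam R) (x y : L) :
    ⁅R x, R y⁆ = R ⁅R x, y⁆ - R ⁅R y, x⁆ - R (lam • ⁅y, x⁆) := by
  rw [hR x y, ← lie_skew (R y) x, ← lie_skew y x, smul_neg]
  simp only [map_add, map_neg, sub_neg_eq_add]

theorem postLie_associator (hR : IsRotaBaxter lam R) (x y z : L) :
    ⁅R ⁅R x, y⁆, z⁆ - ⁅R x, ⁅R y, z⁆⁆ - ⁅R ⁅R y, x⁆, z⁆ + ⁅R y, ⁅R x, z⁆⁆ =
      ⁅R (lam • ⁅y, x⁆), z⁆ := by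
  have h := congrArg (⁅·, z⁆) (hR.lie_apply_apply x y)
  simp only [sub_lie, lie_lie] at h
  linear_combination (norm := abel) -h

end IsRotaBaxter

/-- Any Lie algebra `L` over a field `k` with a Rota–Baxter operator `R` of weight `λ`
becomes a post-Lie algebra under `x ∘ y := [R(x), y]` and `⟨x, y⟩ := λ[x, y]`:
`⟨,⟩` is a Lie bracket (antisymmetric and satisfying Jacobi), and the two post-Lie
identities hold. -/
theorem rb_gives_postlie (k L : Type*) [Field k] [LieRing L] [LieAlgebra k L]
    (lam : k) (R : L →ₗ[k] L)
    (hR : ∀ x y : L, ⁅R x, R y⁆ = R (⁅R x, y⁆ + ⁅x, R y⁆ + lam • ⁅x, y⁆)) :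
    (∀ x y : L, lam • ⁅x, y⁆ = - (lam • ⁅y, x⁆)) ∧
    (∀ x y z : L,
      lam • ⁅lam • ⁅x, y⁆, z⁆ + lam • ⁅lam • ⁅y, z⁆, x⁆ + lam • ⁅lam • ⁅z, x⁆, y⁆ = 0) ∧
    (∀ x y z : L,
      ⁅R ⁅R x, y⁆, z⁆ - ⁅R x, ⁅R y, z⁆⁆ - ⁅R ⁅R y, x⁆, z⁆ + ⁅R y, ⁅R x, z⁆⁆ =
        ⁅R (lam • ⁅y, x⁆), z⁆) ∧
    (∀ x y z : L,
      ⁅R x, lam • ⁅y, z⁆⁆ = lam • ⁅⁅R x, y⁆, z⁆ + lam • ⁅y, ⁅R x, z⁆⁆) :=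
  ⟨smul_lie_eq_neg_smul_lie lam, smul_lie_smul_lie_jacobi lam,
    IsRotaBaxter.postLie_associator hR, fun x => lie_smul_lie_leibniz (R x) lam⟩
end

section
/- Let (L, [,], ∘) be a post-Lie algebra over a field k. On the vector space L × L define the bilinear operation ⟦(a,b),(c,d)⟧ := (a∘c − c∘a + [a,c], a∘d − c∘b + [b,d]). Then ⟦,⟧ is a Lie bracket on L × L, i.e., it is antisymmetric and satisfies the Jacobi identity. -/
/-!
The first post-Lie axiom says that `x ↦ x ∘ ·` turns the sub-adjacent bracket
`x ∘ y - y ∘ x + [x, y]` into the commutator of operators; together with the second axiom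
(each `x ∘ ·` is a derivation of `[,]`) this makes the sub-adjacent bracket a Lie bracket and
`x ↦ x ∘ ·` a morphism from this Lie algebra `L_∘` into the derivations of `(L, [,])`.
The hat bracket is then the bracket of the semidirect sum `L ⋊ L_∘`, with the factors swapped.
-/

namespace PostLie

variable {k L : Type*} [CommRing k] [LieRing L] [LieAlgebra k L]

structure IsPostLie (o : L →ₗ[k] L →ₗ[k] L) : Prop where
  associator_skew (x y z : L) :
    o (o x y) z - o x (o y z) - o (o y x) z + o y (o x z) = o ⁅y, x⁆ z
  apply_lie (x y z : L) : o x ⁅y, z⁆ = ⁅o x y, z⁆ + ⁅y, o x z⁆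

def subadjacentBracket (o : L →ₗ[k] L →ₗ[k] L) (x y : L) : L := o x y - o y x + ⁅x, y⁆

def hatBracket (o : L →ₗ[k] L →ₗ[k] L) (u v : L × L) : L × L :=
  (subadjacentBracket o u.1 v.1, o u.1 v.2 - o v.1 u.2 + ⁅u.2, v.2⁆)

theorem hatBracket_swap (o : L →ₗ[k] L →ₗ[k] L) (u v : L × L) :
    hatBracket o u v = -hatBracket o v u := by
  ext <;> simp only [hatBracket, subadjacentBracket, Prod.fst_neg, Prod.snd_neg] <;>
    rw [← lie_skew] <;> abel

variable {o : L →ₗ[k] L →ₗ[k] L}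

namespace IsPostLie

variable (hP : IsPostLie o)
include hP

theorem apply_subadjacentBracket (x y z : L) :
    o (subadjacentBracket o x y) z = o x (o y z) - o y (o x z) := by
  rw [subadjacentBracket, ← lie_skew, map_add, map_sub, map_neg, LinearMap.add_apply,
    LinearMap.sub_apply, LinearMap.neg_apply, ← hP.associator_skew]
  abel

theorem subadjacentBracket_leibniz (x y z : L) :
    subadjacentBracket o x (subadjacentBracket o y z) =
      subadjacentBracket o (subadjacentBracket o x y) z +
        subadjacentBracket o y (subadjacentBracket o x z) := by
  have hyz := hP.apply_subadjacentBracket y z x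
  have hxy := hP.apply_subadjacentBracket x y z
  have hxz := hP.apply_subadjacentBracket x z y
  simp only [subadjacentBracket, map_add, map_sub, LinearMap.add_apply, LinearMap.sub_apply,
    hP.apply_lie, lie_add, lie_sub, add_lie, sub_lie] at hyz hxy hxz ⊢
  linear_combination (norm := module)
    -hyz - hxy + hxz + leibniz_lie x y z - lie_skew (o z x) y

end IsPostLie

/-- Indexing the type synonym by the proof of the axioms lets the Lie ring instance below
depend on them. -/
def Subadjacent (_ : IsPostLie o) : Type _ := L

namespace Subadjacent

variable (hP : IsPostLie o)

instance : AddCommGroup (Subadjacent hP) := inferInstanceAs (AddCommGroup L)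

instance : Module k (Subadjacent hP) := inferInstanceAs (Module k L)

def equiv : Subadjacent hP ≃ₗ[k] L := LinearEquiv.refl k L

instance : Bracket (Subadjacent hP) (Subadjacent hP) where
  bracket x y := (equiv hP).symm (subadjacentBracket o (equiv hP x) (equiv hP y))

theorem equiv_lie (x y : Subadjacent hP) :
    equiv hP ⁅x, y⁆ = subadjacentBracket o (equiv hP x) (equiv hP y) :=
  (equiv hP).apply_symm_apply _

instance : LieRing (Subadjacent hP) where
  add_lie x y z := (equiv hP).injective <| by
    simp only [equiv_lie, map_add, subadjacentBracket, LinearMap.add_apply, add_lie]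
    abel
  lie_add x y z := (equiv hP).injective <| by
    simp only [equiv_lie, map_add, subadjacentBracket, LinearMap.add_apply, lie_add]
    abel
  lie_self x := (equiv hP).injective <| by
    simp only [equiv_lie, subadjacentBracket, sub_self, lie_self, add_zero, map_zero]
  leibniz_lie x y z := (equiv hP).injective <| by
    rw [map_add, equiv_lie, equiv_lie, equiv_lie, equiv_lie, equiv_lie, equiv_lie,
      hP.subadjacentBracket_leibniz]

instance : LieAlgebra k (Subadjacent hP) where
  lie_smul t x y := (equiv hP).injective <| by
    simp only [equiv_lie, map_smul, subadjacentBracket, LinearMap.smul_apply, lie_smul, smul_sub,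
      smul_add]

def action : Subadjacent hP →ₗ⁅k⁆ LieDerivation k L L where
  toFun x := ⟨o (equiv hP x), fun y z => by
    rw [hP.apply_lie, ← lie_skew (o _ y)]
    abel⟩
  map_add' x y := by ext; simp
  map_smul' t x := by ext; simp
  map_lie' := by
    intro x y
    ext z
    simp only [equiv_lie, LieDerivation.mk_coe, LieDerivation.lie_apply]
    exact hP.apply_subadjacentBracket _ _ z

theorem action_apply (x : Subadjacent hP) (y : L) : action hP x y = o (equiv hP x) y :=
  rfl

def hatEquiv : (L ⋊⁅action hP⁆ Subadjacent hP) ≃ₗ[k] L × L where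
  toFun x := (equiv hP x.right, x.left)
  invFun u := ⟨u.2, (equiv hP).symm u.1⟩
  map_add' _ _ := rfl
  map_smul' _ _ := rfl
  left_inv _ := rfl
  right_inv _ := rfl

theorem hatEquiv_apply (x : L ⋊⁅action hP⁆ Subadjacent hP) :
    hatEquiv hP x = (equiv hP x.right, x.left) :=
  rfl

theorem hatEquiv_lie (x y : L ⋊⁅action hP⁆ Subadjacent hP) :
    hatEquiv hP ⁅x, y⁆ = hatBracket o (hatEquiv hP x) (hatEquiv hP y) := by
  simp only [hatEquiv_apply, hatBracket, LieAlgebra.SemiDirectSum.lie_eq_mk,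
    equiv_lie, action_apply, Prod.mk.injEq, true_and]
  abel

end Subadjacent

namespace IsPostLie

variable (hP : IsPostLie o)
include hP

theorem hatBracket_jacobi (u v w : L × L) :
    hatBracket o (hatBracket o u v) w + hatBracket o (hatBracket o v w) u +
      hatBracket o (hatBracket o w u) v = 0 := by
  obtain ⟨x, rfl⟩ := (Subadjacent.hatEquiv hP).surjective u
  obtain ⟨y, rfl⟩ := (Subadjacent.hatEquiv hP).surjective v
  obtain ⟨z, rfl⟩ := (Subadjacent.hatEquiv hP).surjective w
  simp only [← Subadjacent.hatEquiv_lie, ← map_add]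
  rw [← lie_skew ⁅x, y⁆, ← lie_skew ⁅y, z⁆, ← lie_skew ⁅z, x⁆, ← neg_add, ← neg_add,
    add_rotate, lie_jacobi, neg_zero, map_zero]

end IsPostLie

end PostLie

/-- For a post-Lie algebra `(L, [,], ∘)`, the bracket
`⟦(a,b),(c,d)⟧ := (a∘c − c∘a + [a,c], a∘d − c∘b + [b,d])` on `L × L` is a Lie bracket:
it is antisymmetric and satisfies the Jacobi identity. -/
theorem postlie_hat_bracket_is_lie (k L : Type*) [Field k] [LieRing L] [LieAlgebra k L]
    (o : L →ₗ[k] L →ₗ[k] L)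
    (h1 : ∀ x y z : L,
      o (o x y) z - o x (o y z) - o (o y x) z + o y (o x z) = o ⁅y, x⁆ z)
    (h2 : ∀ x y z : L, o x ⁅y, z⁆ = ⁅o x y, z⁆ + ⁅y, o x z⁆) :
    ∀ B : L × L → L × L → L × L,
      (B = fun u v => (o u.1 v.1 - o v.1 u.1 + ⁅u.1, v.1⁆,
                       o u.1 v.2 - o v.1 u.2 + ⁅u.2, v.2⁆)) →
      (∀ u v : L × L, B u v = - B v u) ∧
      (∀ u v w : L × L, B (B u v) w + B (B v w) u + B (B w u) v = 0) := by
  rintro B rfl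
  exact ⟨PostLie.hatBracket_swap o, (PostLie.IsPostLie.mk h1 h2).hatBracket_jacobi⟩
end

section
/- Let (L, [,], ∘) be a post-Lie algebra over a field k, equip L̂ := L × L with the Lie bracket ⟦(a,b),(c,d)⟧ := (a∘c − c∘a + [a,c], a∘d − c∘b + [b,d]), and let R(a, b) := (b − a, 0). Then the map ι : L → L̂, ι(a) := (0, a), is injective and satisfies ⟦R(ι(a)), ι(b)⟧ = ι(a∘b) and ⟦ι(a), ι(b)⟧ = ι([a, b]) for all a, b ∈ L; hence ι is an injective homomorphism of post-Lie algebras from L into the post-Lie algebra structure on L̂ induced by the weight-1 Rota–Baxter operator R (with operations x ∘' y := ⟦R(x), y⟧ and ⟨x, y⟩' := 1·⟦x, y⟧). -/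
theorem postlie_embeds_into_hat_general (k L : Type*) [Field k] [LieRing L] [LieAlgebra k L]
    (o : L →ₗ[k] L →ₗ[k] L) :
    ∀ (B : L × L → L × L → L × L) (R : L × L → L × L) (ι : L → L × L),
      (B = fun u v => (o u.1 v.1 - o v.1 u.1 + ⁅u.1, v.1⁆,
                       o u.1 v.2 - o v.1 u.2 + ⁅u.2, v.2⁆)) →
      (R = fun u => (u.2 - u.1, 0)) →
      (ι = fun a => ((0 : L), a)) →
      Function.Injective ι ∧
      (∀ a b : L, B (R (ι a)) (ι b) = ι (o a b)) ∧
      (∀ a b : L, B (ι a) (ι b) = ι ⁅a, b⁆) := by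
  rintro B R ι rfl rfl rfl
  exact ⟨Prod.mk_right_injective 0, fun a b => by simp, fun a b => by simp⟩

/-- For a post-Lie algebra `(L, [,], ∘)` with hat bracket
`⟦(a,b),(c,d)⟧ := (a∘c − c∘a + [a,c], a∘d − c∘b + [b,d])` on `L̂ := L × L` and
Rota–Baxter operator `R(a, b) := (b − a, 0)` of weight `1`, the map `ι(a) := (0, a)` is
injective and satisfies `⟦R(ι(a)), ι(b)⟧ = ι(a∘b)` and `⟦ι(a), ι(b)⟧ = ι([a,b])`;
i.e. `ι` is an injective post-Lie homomorphism into the post-Lie structure on `L̂`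
induced by `R` (with `x ∘' y := ⟦R x, y⟧` and `⟨x, y⟩' := 1 • ⟦x, y⟧`). -/
theorem postlie_embeds_into_hat (k L : Type*) [Field k] [LieRing L] [LieAlgebra k L]
    (o : L →ₗ[k] L →ₗ[k] L)
    (h1 : ∀ x y z : L,
      o (o x y) z - o x (o y z) - o (o y x) z + o y (o x z) = o ⁅y, x⁆ z)
    (h2 : ∀ x y z : L, o x ⁅y, z⁆ = ⁅o x y, z⁆ + ⁅y, o x z⁆) :
    ∀ (B : L × L → L × L → L × L) (R : L × L → L × L) (ι : L → L × L),
      (B = fun u v => (o u.1 v.1 - o v.1 u.1 + ⁅u.1, v.1⁆,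
                       o u.1 v.2 - o v.1 u.2 + ⁅u.2, v.2⁆)) →
      (R = fun u => (u.2 - u.1, 0)) →
      (ι = fun a => ((0 : L), a)) →
      Function.Injective ι ∧
      (∀ a b : L, B (R (ι a)) (ι b) = ι (o a b)) ∧
      (∀ a b : L, B (ι a) (ι b) = ι ⁅a, b⁆) :=
  postlie_embeds_into_hat_general k L o
end

section
/- Let (A, ≻, ≺, ·) be a postassociative algebra over a field k and write x * y := x≻y + x≺y + x·y. On the vector space Â := A × A define the bilinear product (a, b) ∗ (c, d) := (a*c, a≻d + b≺c + b·d). Then ∗ is an associative product on Â. -/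
/-!
`Â` is the split extension of `(A, *)` by `A` itself, viewed as an algebra under `·` and as an
`(A, *)`-bimodule under `≻` (left) and `≺` (right). Such an extension `A ⋉ B` is associative as
soon as `(A, *)` and `(B, ·)` are associative, the two actions are associative and commute, and
they are compatible with `·`. The seven postassociative axioms give exactly these compatibilities,
and their sum gives the associativity of `*`.
-/

section SplitExtension

variable {R A B : Type*} [CommSemiring R] [AddCommMonoid A] [AddCommMonoid B]
  [Module R A] [Module R B]

def splitExtMul (m : A →ₗ[R] A →ₗ[R] A) (l : A →ₗ[R] B →ₗ[R] B) (r : B →ₗ[R] A →ₗ[R] B)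
    (n : B →ₗ[R] B →ₗ[R] B) (u v : A × B) : A × B :=
  (m u.1 v.1, l u.1 v.2 + r u.2 v.1 + n u.2 v.2)

theorem splitExtMul_assoc {m : A →ₗ[R] A →ₗ[R] A} {l : A →ₗ[R] B →ₗ[R] B}
    {r : B →ₗ[R] A →ₗ[R] B} {n : B →ₗ[R] B →ₗ[R] B}
    (hm : ∀ x y z, m (m x y) z = m x (m y z))
    (hl : ∀ x y b, l (m x y) b = l x (l y b))
    (hr : ∀ b x y, r (r b x) y = r b (m x y))
    (hlr : ∀ x b y, r (l x b) y = l x (r b y))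
    (hn : ∀ b c e, n (n b c) e = n b (n c e))
    (hln : ∀ x b c, n (l x b) c = l x (n b c))
    (hrn : ∀ b x c, n (r b x) c = n b (l x c))
    (hnr : ∀ b c x, r (n b c) x = n b (r c x))
    (u v w : A × B) :
    splitExtMul m l r n (splitExtMul m l r n u v) w =
      splitExtMul m l r n u (splitExtMul m l r n v w) := by
  refine Prod.ext (hm _ _ _) ?_
  simp only [splitExtMul, map_add, LinearMap.add_apply, hl, hr, hlr, hn, hln, hrn, hnr]
  abel

theorem postassociative_sum_assoc {s p d : A →ₗ[R] A →ₗ[R] A}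
    (h1 : ∀ x y z : A, p (p x y) z = p x (s y z + p y z + d y z))
    (h2 : ∀ x y z : A, p (s x y) z = s x (p y z))
    (h3 : ∀ x y z : A, s (s x y + p x y + d x y) z = s x (s y z))
    (h4 : ∀ x y z : A, s x (d y z) = d (s x y) z)
    (h5 : ∀ x y z : A, d (p x y) z = d x (s y z))
    (h6 : ∀ x y z : A, p (d x y) z = d x (p y z))
    (h7 : ∀ x y z : A, d (d x y) z = d x (d y z)) (x y z : A) :
    (s + p + d) ((s + p + d) x y) z = (s + p + d) x ((s + p + d) y z) := by
  simp only [LinearMap.add_apply, map_add, h1, h2, ← h3, h4, h5, h6, h7]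
  abel

end SplitExtension

/-- For a postassociative algebra `(A, ≻, ≺, ·)` with `x * y := x≻y + x≺y + x·y`, the
product `(a, b) ∗ (c, d) := (a*c, a≻d + b≺c + b·d)` on `Â := A × A` is associative. -/
theorem postassociative_hat_is_associative (k A : Type*) [Field k]
    [AddCommGroup A] [Module k A]
    (s p d : A →ₗ[k] A →ₗ[k] A)  -- s = ≻, p = ≺, d = ·
    (h1 : ∀ x y z : A, p (p x y) z = p x (s y z + p y z + d y z))
    (h2 : ∀ x y z : A, p (s x y) z = s x (p y z))
    (h3 : ∀ x y z : A, s (s x y + p x y + d x y) z = s x (s y z))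
    (h4 : ∀ x y z : A, s x (d y z) = d (s x y) z)
    (h5 : ∀ x y z : A, d (p x y) z = d x (s y z))
    (h6 : ∀ x y z : A, p (d x y) z = d x (p y z))
    (h7 : ∀ x y z : A, d (d x y) z = d x (d y z)) :
    ∀ M : A × A → A × A → A × A,
      (M = fun u v => (s u.1 v.1 + p u.1 v.1 + d u.1 v.1,
                       s u.1 v.2 + p u.2 v.1 + d u.2 v.2)) →
      ∀ u v w : A × A, M (M u v) w = M u (M v w) := by
  rintro M rfl
  exact splitExtMul_assoc (m := s + p + d) (postassociative_sum_assoc h1 h2 h3 h4 h5 h6 h7)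
    h3 h1 h2 h7 (fun x b c => (h4 x b c).symm) h5 h6
end
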